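/- arXiv:2103.10993 — 2 statements merged into one kernel-verified Lean document; each statement's English description precedes it below -/
import Mathlib

section
/- If (X, P, W) is a standard factorization of e ∈ 𝓡, then the monic polynomials N(u) = ∏_{x∈X}(u−x)·∏_{(y,z)∈P}(u−y) and D(u) = ∏_{(y,z)∈P}(u−z)·∏_{w∈W}(u−w) are coprime in ℂ[u]; consequently N and D are the numerator and denominator of e in lowest terms. -/
open Polynomial

/-- The set `Δ_b^a ⊆ ℂ`: equal to `{k ∈ ℕ : k < b − a}` if `b − a ∈ ℕ`,
and to `ℕ` (viewed inside `ℂ`) otherwise. -/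
def DeltaSet (a b : ℂ) : Set ℂ :=
  {x | ∃ k : ℕ, x = (k : ℂ) ∧ ∀ n : ℕ, (n : ℂ) = b - a → k < n}

/-- `b − a ∈ ℕ`. -/
def natDiff (a b : ℂ) : Prop := ∃ n : ℕ, (n : ℂ) = b - a

/-- The linear rational function `u − a`. -/
noncomputable def lin (a : ℂ) : RatFunc ℂ :=
  algebraMap (Polynomial ℂ) (RatFunc ℂ) (X - C a)

/-- The rational function `∏_{x∈X}(u−x) · ∏_{(y,z)∈P}(u−y)/(u−z) · ∏_{w∈W}(u−w)⁻¹`. -/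
noncomputable def stdProd (X : Multiset ℂ) (P : Multiset (ℂ × ℂ)) (W : Multiset ℂ) :
    RatFunc ℂ :=
  (X.map lin).prod * (P.map fun p => lin p.1 / lin p.2).prod *
    (W.map fun w => (lin w)⁻¹).prod

/-- `(X, P, W)` is a standard factorization of `e ∈ 𝓡`. -/
def IsStdFact (e : RatFunc ℂ) (X : Multiset ℂ) (P : Multiset (ℂ × ℂ)) (W : Multiset ℂ) :
    Prop :=
  e = stdProd X P W ∧
  (∀ p ∈ P, ∃ n : ℕ, 0 < n ∧ (n : ℂ) = p.2 - p.1) ∧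
  (∀ p ∈ P, ∀ q ∈ P,
    ¬(p.2 - q.1 ∈ DeltaSet p.1 p.2 ∧ p.2 - q.1 ∈ DeltaSet q.1 q.2)) ∧
  (∀ x ∈ X, ∀ p ∈ P, p.2 - x ∉ DeltaSet p.1 p.2) ∧
  (∀ x ∈ X, ∀ w ∈ W, ¬ natDiff x w) ∧
  (∀ w ∈ W, ∀ p ∈ P, w - p.1 ∉ DeltaSet p.1 p.2)

/-!
Condition (i) puts `0` in every `Δ_z^y`, so conditions (ii)–(v), read at difference `0`, say
that no root of `N` is a root of `D`. Products of linear factors with disjoint root multisets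
are coprime, and a quotient `N / D` with `N`, `D` coprime and `D` monic is already in lowest
terms.
-/

namespace Polynomial

variable {K : Type*} [Field K]

theorem isCoprime_X_sub_C_of_not_isRoot {a : K} {p : K[X]} (h : ¬p.IsRoot a) :
    IsCoprime (X - C a) p :=
  (irreducible_X_sub_C a).coprime_iff_not_dvd.mpr (dvd_iff_isRoot.not.mpr h)

theorem isCoprime_multisetProd_X_sub_C {s t : Multiset K} (h : Disjoint s t) :
    IsCoprime (s.map fun a => X - C a).prod (t.map fun a => X - C a).prod := by
  induction s using Multiset.induction_on with
  | empty => simpa using isCoprime_one_left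
  | cons a s ih =>
    rw [Multiset.disjoint_cons_left] at h
    rw [Multiset.map_cons, Multiset.prod_cons]
    refine (isCoprime_X_sub_C_of_not_isRoot ?_).mul_left (ih h.2)
    simpa [IsRoot, eval_multiset_prod, sub_eq_zero, eq_comm] using h.1

end Polynomial

theorem IsCoprime.gcd_eq_one {R : Type*} [CommRing R] [IsDomain R] [NormalizedGCDMonoid R]
    {p q : R} (h : IsCoprime p q) : gcd p q = 1 := by
  rw [← normalize_gcd, normalize_eq_one, gcd_isUnit_iff_isRelPrime]
  exact h.isRelPrime

namespace RatFunc

variable {K : Type*} [Field K]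

theorem num_div_of_isCoprime {p q : K[X]} (hq : q.Monic) (h : IsCoprime p q) :
    (algebraMap K[X] (RatFunc K) p / algebraMap K[X] (RatFunc K) q).num = p := by
  classical
  simp [num_div, h.gcd_eq_one, hq.leadingCoeff]

theorem denom_div_of_isCoprime {p q : K[X]} (hq : q.Monic) (h : IsCoprime p q) :
    (algebraMap K[X] (RatFunc K) p / algebraMap K[X] (RatFunc K) q).denom = q := by
  classical
  simp [denom_div _ hq.ne_zero, h.gcd_eq_one, hq.leadingCoeff]

end RatFunc

theorem zero_mem_DeltaSet {y z : ℂ} (h : ∃ n : ℕ, 0 < n ∧ (n : ℂ) = z - y) :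
    (0 : ℂ) ∈ DeltaSet y z := by
  obtain ⟨n, hn, hnz⟩ := h
  refine ⟨0, Nat.cast_zero.symm, fun m hm => ?_⟩
  rw [← hnz, Nat.cast_inj] at hm
  omega

theorem stdProd_eq_div (X : Multiset ℂ) (P : Multiset (ℂ × ℂ)) (W : Multiset ℂ) :
    stdProd X P W =
      algebraMap ℂ[X] (RatFunc ℂ)
          ((X.map fun x => Polynomial.X - C x).prod * (P.map fun p => Polynomial.X - C p.1).prod) /
        algebraMap ℂ[X] (RatFunc ℂ)
          ((P.map fun p => Polynomial.X - C p.2).prod *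
            (W.map fun w => Polynomial.X - C w).prod) := by
  unfold stdProd lin
  simp only [map_mul, map_multiset_prod, Multiset.map_map, Function.comp_def,
    Multiset.prod_map_div, Multiset.prod_map_inv]
  ring

theorem IsStdFact.disjoint {e : RatFunc ℂ} {X : Multiset ℂ} {P : Multiset (ℂ × ℂ)}
    {W : Multiset ℂ} (h : IsStdFact e X P W) :
    Disjoint (X + P.map Prod.fst) (P.map Prod.snd + W) := by
  obtain ⟨-, hpos, hPP, hXP, hXW, hWP⟩ := h
  have h0 (p) (hp : p ∈ P) : (0 : ℂ) ∈ DeltaSet p.1 p.2 := zero_mem_DeltaSet (hpos p hp)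
  simp only [Multiset.disjoint_left, Multiset.mem_add, Multiset.mem_map]
  rintro a (hx | ⟨q, hq, rfl⟩) (⟨p, hp, hpa⟩ | hw)
  · exact hXP a hx p hp (by rw [sub_eq_zero.mpr hpa]; exact h0 p hp)
  · exact hXW a hx a hw ⟨0, by simp⟩
  · exact hPP p hp q hq (by rw [sub_eq_zero.mpr hpa]; exact ⟨h0 p hp, h0 q hq⟩)
  · exact hWP q.1 hw q hq (by rw [sub_self]; exact h0 q hq)

/-- If `(X, P, W)` is a standard factorization of `e`, then the monic polynomials
`N(u) = ∏_{x∈X}(u−x)·∏_{(y,z)∈P}(u−y)` and `D(u) = ∏_{(y,z)∈P}(u−z)·∏_{w∈W}(u−w)` are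
coprime in `ℂ[u]`, and consequently they are the numerator and the denominator of `e`
in lowest terms. -/
theorem stdFact_num_denom (e : RatFunc ℂ)
    (X : Multiset ℂ) (P : Multiset (ℂ × ℂ)) (W : Multiset ℂ)
    (h : IsStdFact e X P W) :
    IsCoprime
      ((X.map fun x => Polynomial.X - C x).prod * (P.map fun p => Polynomial.X - C p.1).prod)
      ((P.map fun p => Polynomial.X - C p.2).prod * (W.map fun w => Polynomial.X - C w).prod) ∧
    e.num =
      (X.map fun x => Polynomial.X - C x).prod * (P.map fun p => Polynomial.X - C p.1).prod ∧
    e.denom =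
      (P.map fun p => Polynomial.X - C p.2).prod * (W.map fun w => Polynomial.X - C w).prod := by
  have hcop := isCoprime_multisetProd_X_sub_C h.disjoint
  have hD := monic_multisetProd_X_sub_C (P.map Prod.snd + W)
  simp only [Multiset.map_add, Multiset.prod_add, Multiset.map_map, Function.comp_def] at hcop hD
  rw [h.1, stdProd_eq_div]
  exact ⟨hcop, RatFunc.num_div_of_isCoprime hD hcop, RatFunc.denom_div_of_isCoprime hD hcop⟩
end

section
/- Let e ∈ 𝓡, let y₀ be a zero and z₀ a pole of e with z₀ − y₀ ∈ ℕ, and assume the minimality property (H1): for every zero y and every pole z of e, z − y ∈ ℕ implies z − y ≥ z₀ − y₀. If (X, P, W) is a standard factorization of f := ((u−z₀)/(u−y₀))·e, then (X, P + {(y₀, z₀)}, W) is a standard factorization of e. -/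
open Polynomial

/-!
Write `f = (u − z₀)/(u − y₀) · e`. Since `z₀` is a pole of `e`, the factor `u − z₀` cancels
against it, so every zero of `f` is a zero of `e`; symmetrically every pole of `f` is a pole
of `e`. Hence all entries of `X` and first components of `P` are zeros of `e`, and all entries
of `W` and second components of `P` are poles of `e`. Every new instance of conditions
(ii), (iii), (v) involving the pair `(y₀, z₀)` asks that some `z₀ − y` or `z − y₀` with `y` a
zero and `z` a pole of `e` not be a natural number `< z₀ − y₀`, which is exactly (H1).
-/

section Polynomial

variable {K : Type*} [Field K]

theorem not_isRoot_of_isCoprime {p q : K[X]} (h : IsCoprime p q) {a : K} (hp : p.IsRoot a) :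
    ¬q.IsRoot a := fun hq =>
  not_isUnit_X_sub_C a (h.isUnit_of_dvd' (dvd_iff_isRoot.mpr hp) (dvd_iff_isRoot.mpr hq))

theorem isRoot_of_mul_eq_X_sub_C_mul {p q r s t : K[X]} {z a : K}
    (h : p * (t * s) = (X - C z) * r * q) (hpq : IsCoprime p q) (hrs : IsCoprime r s)
    (hz : s.IsRoot z) (ha : p.IsRoot a) : r.IsRoot a := by
  by_cases haz : a = z
  · subst haz
    exfalso
    have hdvd : (X - C a) * (X - C a) ∣ (X - C a) * (r * q) := by
      rw [← mul_assoc, ← h]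
      exact mul_dvd_mul (dvd_iff_isRoot.mpr ha) (dvd_mul_of_dvd_right (dvd_iff_isRoot.mpr hz) t)
    rcases (prime_X_sub_C a).dvd_or_dvd ((mul_dvd_mul_iff_left (X_sub_C_ne_zero a)).mp hdvd)
      with hr | hq
    · exact not_isRoot_of_isCoprime hrs (dvd_iff_isRoot.mp hr) hz
    · exact not_isRoot_of_isCoprime hpq ha (dvd_iff_isRoot.mp hq)
  · have heval := congrArg (eval a) h
    simp only [eval_mul, eval_sub, eval_X, eval_C, ha.eq_zero, zero_mul] at heval
    have hq : q.eval a ≠ 0 := not_isRoot_of_isCoprime hpq ha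
    simpa [sub_eq_zero, haz, hq] using heval.symm

noncomputable def prodXSubC (s : Multiset K) : K[X] :=
  (s.map fun a => X - C a).prod

theorem prodXSubC_ne_zero (s : Multiset K) : prodXSubC s ≠ 0 :=
  (monic_multiset_prod_of_monic _ _ fun a _ => monic_X_sub_C a).ne_zero

theorem isRoot_prodXSubC {s : Multiset K} {a : K} : (prodXSubC s).IsRoot a ↔ a ∈ s := by
  rw [← mem_roots (prodXSubC_ne_zero s), prodXSubC, roots_multiset_prod_X_sub_C]

theorem prodXSubC_add (s t : Multiset K) : prodXSubC (s + t) = prodXSubC s * prodXSubC t := by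
  rw [prodXSubC, prodXSubC, prodXSubC, Multiset.map_add, Multiset.prod_add]

theorem RatFunc.isRoot_num_of_eq_div {f : RatFunc K} {N D : K[X]} (hD : D ≠ 0)
    (hf : f = algebraMap _ _ N / algebraMap _ _ D) {a : K} (hN : N.IsRoot a)
    (hDa : ¬D.IsRoot a) : f.num.IsRoot a := by
  have heval := congrArg (Polynomial.eval a) ((RatFunc.num_mul_eq_mul_denom_iff hD).mpr hf)
  rw [Polynomial.eval_mul, Polynomial.eval_mul, hN.eq_zero, zero_mul] at heval
  exact (mul_eq_zero.mp heval).resolve_right hDa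

theorem RatFunc.isRoot_denom_of_eq_div {f : RatFunc K} {N D : K[X]} (hD : D ≠ 0)
    (hf : f = algebraMap _ _ N / algebraMap _ _ D) {a : K} (hNa : ¬N.IsRoot a)
    (hDa : D.IsRoot a) : f.denom.IsRoot a := by
  have heval := congrArg (Polynomial.eval a) ((RatFunc.num_mul_eq_mul_denom_iff hD).mpr hf)
  rw [Polynomial.eval_mul, Polynomial.eval_mul, hDa.eq_zero, mul_zero] at heval
  exact (mul_eq_zero.mp heval.symm).resolve_left hNa

end Polynomial

theorem lin_ne_zero (a : ℂ) : lin a ≠ 0 :=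
  RatFunc.algebraMap_ne_zero (X_sub_C_ne_zero a)

theorem algebraMap_prodXSubC (s : Multiset ℂ) :
    algebraMap ℂ[X] (RatFunc ℂ) (prodXSubC s) = (s.map lin).prod := by
  rw [prodXSubC, map_multiset_prod, Multiset.map_map]
  rfl

theorem stdProd_eq_div_s6 (X : Multiset ℂ) (P : Multiset (ℂ × ℂ)) (W : Multiset ℂ) :
    stdProd X P W =
      algebraMap _ _ (prodXSubC (X + P.map Prod.fst)) /
        algebraMap _ _ (prodXSubC (P.map Prod.snd + W)) := by
  rw [stdProd, Multiset.prod_map_div, Multiset.prod_map_inv, prodXSubC_add, prodXSubC_add,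
    map_mul, map_mul, algebraMap_prodXSubC, algebraMap_prodXSubC, algebraMap_prodXSubC,
    algebraMap_prodXSubC, Multiset.map_map, Multiset.map_map, Function.comp_def,
    Function.comp_def]
  field_simp

theorem stdProd_cons (X : Multiset ℂ) (y z : ℂ) (P : Multiset (ℂ × ℂ)) (W : Multiset ℂ) :
    stdProd X ((y, z) ::ₘ P) W = lin y / lin z * stdProd X P W := by
  rw [stdProd, stdProd, Multiset.map_cons, Multiset.prod_cons]
  ring

theorem num_lin_div_lin_mul_mul (e : RatFunc ℂ) (y z : ℂ) :
    (lin z / lin y * e).num * ((Polynomial.X - C y) * e.denom) =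
      (Polynomial.X - C z) * e.num * (lin z / lin y * e).denom := by
  refine (RatFunc.num_mul_eq_mul_denom_iff
    (mul_ne_zero (X_sub_C_ne_zero y) e.denom_ne_zero)).mpr ?_
  rw [map_mul, map_mul, ← div_mul_div_comm, RatFunc.num_div_denom]
  rfl

theorem isRoot_num_of_isRoot_num_lin_div_lin_mul {e : RatFunc ℂ} {y z a : ℂ}
    (hz : e.denom.IsRoot z) (ha : (lin z / lin y * e).num.IsRoot a) : e.num.IsRoot a :=
  isRoot_of_mul_eq_X_sub_C_mul (num_lin_div_lin_mul_mul e y z)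
    (RatFunc.isCoprime_num_denom _) (RatFunc.isCoprime_num_denom e) hz ha

theorem isRoot_denom_of_isRoot_denom_lin_div_lin_mul {e : RatFunc ℂ} {y z a : ℂ}
    (hy : e.num.IsRoot y) (ha : (lin z / lin y * e).denom.IsRoot a) : e.denom.IsRoot a :=
  isRoot_of_mul_eq_X_sub_C_mul (t := Polynomial.X - C z)
    (by linear_combination (num_lin_div_lin_mul_mul e y z).symm)
    (RatFunc.isCoprime_num_denom _).symm (RatFunc.isCoprime_num_denom e).symm hy ha

theorem zero_mem_deltaSet {a b : ℂ} (h : ∃ n : ℕ, 0 < n ∧ (n : ℂ) = b - a) :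
    (0 : ℂ) ∈ DeltaSet a b := by
  obtain ⟨n, hn, hba⟩ := h
  refine ⟨0, Nat.cast_zero.symm, fun m hm => ?_⟩
  rwa [Nat.cast_injective (hm.trans hba.symm)]

theorem notMem_deltaSet_of_le {a b x : ℂ} {n : ℕ} (hn : (n : ℂ) = b - a)
    (hle : ∀ m : ℕ, (m : ℂ) = x → n ≤ m) : x ∉ DeltaSet a b := by
  rintro ⟨k, rfl, hk⟩
  exact (hk n hn).not_ge (hle k rfl)

namespace IsStdFact

variable {f : RatFunc ℂ} {X : Multiset ℂ} {P : Multiset (ℂ × ℂ)} {W : Multiset ℂ}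

theorem notMem_poles (h : IsStdFact f X P W) {a : ℂ} (ha : a ∈ X + P.map Prod.fst) :
    a ∉ P.map Prod.snd + W := by
  obtain ⟨-, hpos, hPP, hXP, hXW, hWP⟩ := h
  intro hpole
  rcases Multiset.mem_add.mp ha with hx | hy <;> rcases Multiset.mem_add.mp hpole with hz | hw
  · obtain ⟨p, hp, rfl⟩ := Multiset.mem_map.mp hz
    exact hXP _ hx p hp (by simpa using zero_mem_deltaSet (hpos p hp))
  · exact hXW a hx a hw ⟨0, by simp⟩
  · obtain ⟨q, hq, rfl⟩ := Multiset.mem_map.mp hy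
    obtain ⟨p, hp, hpq⟩ := Multiset.mem_map.mp hz
    exact hPP p hp q hq (by
      simpa [hpq] using And.intro (zero_mem_deltaSet (hpos p hp)) (zero_mem_deltaSet (hpos q hq)))
  · obtain ⟨q, hq, rfl⟩ := Multiset.mem_map.mp hy
    exact hWP _ hw q hq (by simpa using zero_mem_deltaSet (hpos q hq))

theorem isRoot_num (h : IsStdFact f X P W) {a : ℂ} (ha : a ∈ X + P.map Prod.fst) :
    f.num.IsRoot a :=
  RatFunc.isRoot_num_of_eq_div (prodXSubC_ne_zero _) (h.1.trans (stdProd_eq_div_s6 X P W))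
    (isRoot_prodXSubC.mpr ha) (mt isRoot_prodXSubC.mp (h.notMem_poles ha))

theorem isRoot_denom (h : IsStdFact f X P W) {a : ℂ} (ha : a ∈ P.map Prod.snd + W) :
    f.denom.IsRoot a :=
  RatFunc.isRoot_denom_of_eq_div (prodXSubC_ne_zero _) (h.1.trans (stdProd_eq_div_s6 X P W))
    (fun hN => h.notMem_poles (isRoot_prodXSubC.mp hN) ha) (isRoot_prodXSubC.mpr ha)

theorem cons (h : IsStdFact f X P W) {e : RatFunc ℂ} {y z : ℂ} (he : e = lin y / lin z * f)
    (hyz : ∃ n : ℕ, 0 < n ∧ (n : ℂ) = z - y)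
    (hzeros : ∀ a ∈ y ::ₘ (X + P.map Prod.fst), z - a ∉ DeltaSet y z)
    (hpoles : ∀ b ∈ P.map Prod.snd + W, b - y ∉ DeltaSet y z) :
    IsStdFact e X ((y, z) ::ₘ P) W := by
  obtain ⟨hf, hpos, hPP, hXP, hXW, hWP⟩ := h
  have fst_mem_zeros {q} (hq : q ∈ P) : q.1 ∈ y ::ₘ (X + P.map Prod.fst) :=
    Multiset.mem_cons_of_mem (Multiset.mem_add.mpr (.inr (Multiset.mem_map_of_mem _ hq)))
  refine ⟨by rw [he, hf, stdProd_cons], ?_, ?_, ?_, hXW, ?_⟩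
  · intro p hp
    rcases Multiset.mem_cons.mp hp with rfl | hp
    exacts [hyz, hpos p hp]
  · intro p hp q hq
    rcases Multiset.mem_cons.mp hp with rfl | hp <;> rcases Multiset.mem_cons.mp hq with rfl | hq
    · exact fun hΔ => hzeros _ (Multiset.mem_cons_self _ _) hΔ.1
    · exact fun hΔ => hzeros _ (fst_mem_zeros hq) hΔ.1
    · exact fun hΔ => hpoles _ (Multiset.mem_add.mpr (.inl (Multiset.mem_map_of_mem _ hp))) hΔ.2
    · exact hPP p hp q hq
  · intro x hx p hp
    rcases Multiset.mem_cons.mp hp with rfl | hp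
    exacts [hzeros x (Multiset.mem_cons_of_mem (Multiset.mem_add.mpr (.inl hx))), hXP x hx p hp]
  · intro w hw p hp
    rcases Multiset.mem_cons.mp hp with rfl | hp
    exacts [hpoles w (Multiset.mem_add.mpr (.inr hw)), hWP w hw p hp]

end IsStdFact

theorem stdFact_extend_general (e : RatFunc ℂ)
    (y₀ z₀ : ℂ) (hy₀ : e.num.IsRoot y₀) (hz₀ : e.denom.IsRoot z₀)
    (n₀ : ℕ) (hn₀ : (n₀ : ℂ) = z₀ - y₀)
    (H1 : ∀ y z : ℂ, e.num.IsRoot y → e.denom.IsRoot z →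
      ∀ m : ℕ, (m : ℂ) = z - y → n₀ ≤ m)
    (X : Multiset ℂ) (P : Multiset (ℂ × ℂ)) (W : Multiset ℂ)
    (h : IsStdFact (lin z₀ / lin y₀ * e) X P W) :
    IsStdFact e X ((y₀, z₀) ::ₘ P) W := by
  have hn₀_pos : 0 < n₀ := by
    refine Nat.pos_of_ne_zero fun h0 => not_isRoot_of_isCoprime e.isCoprime_num_denom hy₀ ?_
    have hyz : z₀ - y₀ = 0 := by rw [← hn₀, h0, Nat.cast_zero]
    rwa [sub_eq_zero.mp hyz] at hz₀
  refine h.cons (by field_simp [lin_ne_zero]) ⟨n₀, hn₀_pos, hn₀⟩ ?_ ?_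
  · intro a ha
    have hzero : e.num.IsRoot a := by
      rcases Multiset.mem_cons.mp ha with rfl | ha
      exacts [hy₀, isRoot_num_of_isRoot_num_lin_div_lin_mul hz₀ (h.isRoot_num ha)]
    exact notMem_deltaSet_of_le hn₀ (H1 a z₀ hzero hz₀)
  · intro b hb
    exact notMem_deltaSet_of_le hn₀
      (H1 y₀ b hy₀ (isRoot_denom_of_isRoot_denom_lin_div_lin_mul hy₀ (h.isRoot_denom hb)))

/-- Let `y₀` be a zero and `z₀` a pole of `e ∈ 𝓡` with `z₀ − y₀ ∈ ℕ`, minimal among all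
differences `z − y ∈ ℕ` of a pole `z` and a zero `y` of `e` (hypothesis (H1)). If
`(X, P, W)` is a standard factorization of `f = ((u−z₀)/(u−y₀))·e`, then
`(X, P + {(y₀,z₀)}, W)` is a standard factorization of `e`. -/
theorem stdFact_extend (e : RatFunc ℂ) (he : e ≠ 0)
    (hnum : e.num.Monic) (hden : e.denom.Monic)
    (y₀ z₀ : ℂ) (hy₀ : e.num.IsRoot y₀) (hz₀ : e.denom.IsRoot z₀)
    (n₀ : ℕ) (hn₀ : (n₀ : ℂ) = z₀ - y₀)
    (H1 : ∀ y z : ℂ, e.num.IsRoot y → e.denom.IsRoot z →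
      ∀ m : ℕ, (m : ℂ) = z - y → n₀ ≤ m)
    (X : Multiset ℂ) (P : Multiset (ℂ × ℂ)) (W : Multiset ℂ)
    (h : IsStdFact (lin z₀ / lin y₀ * e) X P W) :
    IsStdFact e X ((y₀, z₀) ::ₘ P) W :=
  stdFact_extend_general e y₀ z₀ hy₀ hz₀ n₀ hn₀ H1 X P W h
end
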